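/- arXiv:1910.13536 — 2 statements merged into one kernel-verified Lean document; each statement's English description precedes it below -/
import Mathlib

section
/- Let a₁, a₂, a₃ > 0 be real numbers, let t₁, t₃ ∈ ℝ, and let M = [[p, q],[r, s]] be a real 2×2 matrix with determinant 1 and p ≠ 0. Then there exist t₁', t₂', t₃' ∈ ℝ with t₂' ≠ 0 such that [[t₁', −1/a₁],[a₁, 0]] · [[t₂', −1/a₂],[a₂, 0]] · [[t₃', −1/a₃],[a₃, 0]] = [[t₁, −1/a₁],[a₁, 0]] · M · [[t₃, −1/a₃],[a₃, 0]]. -/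
/-!
Every `M ∈ SL(2)` with `M 0 0 ≠ 0` factors, for any `a ≠ 0`, as
`!![1, 0; α, 1] * !![M 0 0, -1/a; a, 0] * !![1, β; 0, 1]` (a Bruhat-type decomposition).
A lower unitriangular factor on the right of `!![t, -1/a; a, 0]`, and an upper unitriangular
factor on its left, only shift the parameter `t`; so the two outer triangular factors are absorbed
into the outer matrices of `!![t₁, -1/a₁; a₁, 0] * M * !![t₃, -1/a₃; a₃, 0]`.
-/

namespace Matrix

variable {K : Type*} [Field K]

def jMatrix (t a : K) : Matrix (Fin 2) (Fin 2) K := !![t, -1/a; a, 0]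

theorem upperUnit_mul_jMatrix (x t a : K) :
    !![1, x; 0, 1] * jMatrix t a = jMatrix (t + x * a) a := by
  simp [jMatrix]

theorem jMatrix_mul_lowerUnit (t a y : K) :
    jMatrix t a * !![1, 0; y, 1] = jMatrix (t - y / a) a := by
  simp [jMatrix, sub_eq_add_neg, neg_div, inv_mul_eq_div]

theorem exists_eq_lowerUnit_mul_jMatrix_mul_upperUnit {M : Matrix (Fin 2) (Fin 2) K}
    (hdet : M.det = 1) (hp : M 0 0 ≠ 0) {a : K} (ha : a ≠ 0) :
    ∃ α β : K, M = !![1, 0; α, 1] * jMatrix (M 0 0) a * !![1, β; 0, 1] := by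
  refine ⟨(M 1 0 - a) / M 0 0, (M 0 1 + 1 / a) / M 0 0, ?_⟩
  rw [det_fin_two] at hdet
  ext i j
  fin_cases i <;> fin_cases j <;> simp [jMatrix] <;> field_simp <;>
    first | ring1 | linear_combination a * hdet

end Matrix

open Matrix in
theorem stmt9_general (a₁ a₂ a₃ : ℝ) (ha₂ : 0 < a₂)
    (t₁ t₃ : ℝ) (M : Matrix (Fin 2) (Fin 2) ℝ) (hdet : M.det = 1) (hp : M 0 0 ≠ 0) :
    ∃ t₁' t₂' t₃' : ℝ, t₂' ≠ 0 ∧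
      !![t₁', -1/a₁; a₁, 0] * !![t₂', -1/a₂; a₂, 0] * !![t₃', -1/a₃; a₃, 0] =
        !![t₁, -1/a₁; a₁, 0] * M * !![t₃, -1/a₃; a₃, 0] := by
  obtain ⟨α, β, hM⟩ := exists_eq_lowerUnit_mul_jMatrix_mul_upperUnit hdet hp ha₂.ne'
  refine ⟨t₁ - α / a₁, M 0 0, t₃ + β * a₃, hp, ?_⟩
  change _ = jMatrix t₁ a₁ * M * jMatrix t₃ a₃
  calc jMatrix (t₁ - α / a₁) a₁ * jMatrix (M 0 0) a₂ * jMatrix (t₃ + β * a₃) a₃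
      = jMatrix t₁ a₁ * !![1, 0; α, 1] * jMatrix (M 0 0) a₂ *
          (!![1, β; 0, 1] * jMatrix t₃ a₃) := by
        rw [jMatrix_mul_lowerUnit, upperUnit_mul_jMatrix]
    _ = jMatrix t₁ a₁ * M * jMatrix t₃ a₃ := by
        conv_rhs => rw [hM]
        simp only [Matrix.mul_assoc]

/-- For a₁,a₂,a₃ > 0, t₁,t₃ ∈ ℝ and M = [[p,q],[r,s]] with det M = 1 and p ≠ 0,
there exist t₁',t₂',t₃' with t₂' ≠ 0 such that the product of the three J-type matrices with
parameters (t₁',a₁), (t₂',a₂), (t₃',a₃) equals [[t₁,−1/a₁],[a₁,0]]·M·[[t₃,−1/a₃],[a₃,0]]. -/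
theorem stmt9 (a₁ a₂ a₃ : ℝ) (ha₁ : 0 < a₁) (ha₂ : 0 < a₂) (ha₃ : 0 < a₃)
    (t₁ t₃ : ℝ) (M : Matrix (Fin 2) (Fin 2) ℝ) (hdet : M.det = 1) (hp : M 0 0 ≠ 0) :
    ∃ t₁' t₂' t₃' : ℝ, t₂' ≠ 0 ∧
      !![t₁', -1/a₁; a₁, 0] * !![t₂', -1/a₂; a₂, 0] * !![t₃', -1/a₃; a₃, 0] =
        !![t₁, -1/a₁; a₁, 0] * M * !![t₃, -1/a₃; a₃, 0] :=
  stmt9_general a₁ a₂ a₃ ha₂ t₁ t₃ M hdet hp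
end

section
/- For every point (x, y) ∈ ℝ² with x < 0 there exists a unique s ∈ [0,1) such that for some γ ∈ ℝ one has x = −(1 + s·cos γ)/√(1−s²) and y = (s·sin γ)/√(1−s²); moreover this unique s satisfies 1/√(1−s²) = (x² + y² + 1)/(−2x). -/
/-!
Write `t = √(1 - s²) ∈ (0, 1]`. The point `(x, y)` lies on the circle of parameter `s` iff
`(x t + 1)² + (y t)² = s² = 1 - t²`, which after expanding and cancelling `t > 0` reads
`t (x² + y² + 1) = -2x`. So `t`, and with it `s`, is determined by `(x, y)`; conversely
`t = -2x / (x² + y² + 1)` lies in `(0, 1]` for `x < 0` because `(x + 1)² + y² ≥ 0`.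
-/

open Real

theorem exists_cos_eq_and_sin_eq {a b : ℝ} (h : a ^ 2 + b ^ 2 = 1) :
    ∃ γ : ℝ, cos γ = a ∧ sin γ = b := by
  set z : ℂ := ⟨a, b⟩
  have hz : ‖z‖ = 1 := by
    rw [Complex.norm_def, Complex.normSq_mk, ← sq, ← sq, h, sqrt_one]
  refine ⟨z.arg, ?_, ?_⟩
  · rw [Complex.cos_arg (norm_ne_zero_iff.1 (hz ▸ one_ne_zero)), hz, div_one]
  · rw [Complex.sin_arg, hz, div_one]

theorem exists_eq_mul_cos_and_eq_mul_sin_iff {r u v : ℝ} :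
    (∃ γ : ℝ, u = r * cos γ ∧ v = r * sin γ) ↔ u ^ 2 + v ^ 2 = r ^ 2 := by
  constructor
  · rintro ⟨γ, rfl, rfl⟩
    linear_combination r ^ 2 * cos_sq_add_sin_sq γ
  · intro h
    rcases eq_or_ne r 0 with rfl | hr
    · exact ⟨0, by nlinarith, by nlinarith⟩
    obtain ⟨γ, hcos, hsin⟩ : ∃ γ : ℝ, cos γ = u / r ∧ sin γ = v / r :=
      exists_cos_eq_and_sin_eq (by field_simp; linear_combination h)
    exact ⟨γ, by rw [hcos]; field_simp, by rw [hsin]; field_simp⟩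

def OnCircle (s x y : ℝ) : Prop :=
  ∃ γ : ℝ, x = -(1 + s * cos γ) / √(1 - s ^ 2) ∧ y = s * sin γ / √(1 - s ^ 2)

theorem onCircle_iff {s x y : ℝ} (hs : s ^ 2 < 1) :
    OnCircle s x y ↔ √(1 - s ^ 2) = -2 * x / (x ^ 2 + y ^ 2 + 1) := by
  set t := √(1 - s ^ 2)
  have ht : 0 < t := sqrt_pos.2 (by linarith)
  have ht2 : t ^ 2 = 1 - s ^ 2 := sq_sqrt (by linarith)
  calc OnCircle s x y
      ↔ ∃ γ : ℝ, -(x * t + 1) = s * cos γ ∧ y * t = s * sin γ := by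
        refine exists_congr fun γ => and_congr ?_ ?_
        · rw [eq_div_iff ht.ne']; constructor <;> intro h <;> linarith
        · rw [eq_div_iff ht.ne']
    _ ↔ (x * t + 1) ^ 2 + (y * t) ^ 2 = s ^ 2 := by
        rw [exists_eq_mul_cos_and_eq_mul_sin_iff, neg_sq]
    _ ↔ t * (t * (x ^ 2 + y ^ 2 + 1) + 2 * x) = 0 := by
        constructor
        · intro h; linear_combination h + ht2
        · intro h; linear_combination h - ht2
    _ ↔ t = -2 * x / (x ^ 2 + y ^ 2 + 1) := by
        rw [mul_eq_zero, or_iff_right ht.ne', eq_div_iff (by positivity)]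
        constructor <;> intro h <;> linarith

theorem existsUnique_sqrt_one_sub_sq_eq {t : ℝ} (ht0 : 0 < t) (ht1 : t ≤ 1) :
    ∃! s : ℝ, (0 ≤ s ∧ s < 1) ∧ √(1 - s ^ 2) = t := by
  refine ⟨√(1 - t ^ 2), ⟨⟨sqrt_nonneg _, ?_⟩, ?_⟩, ?_⟩
  · rw [sqrt_lt' one_pos]; nlinarith
  · rw [sq_sqrt (by nlinarith), sub_sub_cancel, sqrt_sq ht0.le]
  · rintro s ⟨⟨hs0, hs1⟩, hst⟩
    rw [← hst, sq_sqrt (by nlinarith), sub_sub_cancel, sqrt_sq hs0]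

/-- for every `(x,y)` in the open left half-plane there is a unique `s ∈ [0,1)`
such that `(x,y) = (−(1 + s·cos γ)/√(1−s²), (s·sin γ)/√(1−s²))` for some `γ ∈ ℝ`; moreover this
unique `s` satisfies `1/√(1−s²) = (x² + y² + 1)/(−2x)`. -/
theorem stmt12 (x y : ℝ) (hx : x < 0) :
    (∃! s : ℝ, (0 ≤ s ∧ s < 1) ∧ ∃ γ : ℝ,
        x = -(1 + s * Real.cos γ) / Real.sqrt (1 - s ^ 2) ∧
        y = s * Real.sin γ / Real.sqrt (1 - s ^ 2)) ∧
    (∀ s : ℝ, (0 ≤ s ∧ s < 1) →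
      (∃ γ : ℝ,
        x = -(1 + s * Real.cos γ) / Real.sqrt (1 - s ^ 2) ∧
        y = s * Real.sin γ / Real.sqrt (1 - s ^ 2)) →
      (Real.sqrt (1 - s ^ 2))⁻¹ = (x ^ 2 + y ^ 2 + 1) / (-2 * x)) := by
  have sq_lt_one {s : ℝ} (hs : 0 ≤ s ∧ s < 1) : s ^ 2 < 1 := by nlinarith
  refine ⟨?_, fun s hs hxy => ?_⟩
  · have hpos : 0 < -2 * x / (x ^ 2 + y ^ 2 + 1) := div_pos (by linarith) (by positivity)
    have hle : -2 * x / (x ^ 2 + y ^ 2 + 1) ≤ 1 := by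
      rw [div_le_one (by positivity)]; nlinarith [sq_nonneg (x + 1), sq_nonneg y]
    refine (existsUnique_congr fun s => ?_).2 (existsUnique_sqrt_one_sub_sq_eq hpos hle)
    exact and_congr_right fun hs => onCircle_iff (sq_lt_one hs)
  · rw [(onCircle_iff (sq_lt_one hs)).1 hxy, inv_div]
end
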